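/- arXiv:2305.03120 — 3 statements merged into one kernel-verified Lean document; each statement's English description precedes it below -/
import Mathlib

section
/- Let V be a monoidal category admitting small products and let A be an object of V. Then A is very flat if and only if A is flat and for every small family (B_i)_{i∈I} of objects of V the canonical morphism ĵ : (∏_{i∈I} B_i) ⊗ A ⟶ ∏_{i∈I} (B_i ⊗ A), determined by π'_i ∘ ĵ = π_i ⊗ id_A for all i ∈ I (where π_i and π'_i are the product projections), is a monomorphism. -/
open CategoryTheory Category MonoidalCategory Limits

/-!
A family `β i : B ⟶ Bi i` is jointly monic iff its tupling `B ⟶ ∏ Bi` is mono, and the tupling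
of the family `β i ⊗ A` factors as `(Pi.lift β ⊗ A) ≫ ĵ`. Hence flatness together with `ĵ` mono
gives very flatness; conversely, apply very flatness to a single mono and to the projections.
-/

universe w v u

/-- A family of morphisms `(f i : X ⟶ Y i)` is jointly monic if any parallel pair
equalized by all members of the family is equal. -/
def JointlyMonic {V : Type u} [Category.{v} V] {ι : Type w} {X : V} {Y : ι → V}
    (f : ∀ i, X ⟶ Y i) : Prop :=
  ∀ ⦃W : V⦄ (g h : W ⟶ X), (∀ i, g ≫ f i = h ≫ f i) → g = h

/-- An object `A` is flat if the endofunctor `- ⊗ A` preserves monomorphisms. -/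
def Flat {V : Type u} [Category.{v} V] [MonoidalCategory V] (A : V) : Prop :=
  ∀ ⦃X Y : V⦄ (f : X ⟶ Y), Mono f → Mono (f ⊗ₘ 𝟙 A)

/-- An object `A` is very flat if the endofunctor `- ⊗ A` preserves jointly monic families. -/
def VeryFlat {V : Type u} [Category.{v} V] [MonoidalCategory V] (A : V) : Prop :=
  ∀ {ι : Type w} {B : V} {Bi : ι → V} (β : ∀ i, B ⟶ Bi i),
    JointlyMonic β → JointlyMonic (fun i => β i ⊗ₘ 𝟙 A)

namespace JointlyMonic

variable {V : Type u} [Category.{v} V]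

theorem const_iff_mono {ι : Type w} [Nonempty ι] {X Y : V} (f : X ⟶ Y) :
    JointlyMonic (fun _ : ι => f) ↔ Mono f := by
  obtain ⟨i⟩ := ‹Nonempty ι›
  exact ⟨fun hf => ⟨fun g h he => hf g h fun _ => he⟩,
    fun _ _ g h he => (cancel_mono f).1 (he i)⟩

theorem iff_mono_pi_lift {ι : Type w} {X : V} {Y : ι → V} [HasProduct Y] (f : ∀ i, X ⟶ Y i) :
    JointlyMonic f ↔ Mono (Pi.lift f) :=
  ⟨fun hf => ⟨fun g h he => hf g h fun i => by simpa using he =≫ Pi.π Y i⟩,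
    fun _ _ g h he => (cancel_mono (Pi.lift f)).1 (Pi.hom_ext _ _ fun i => by simpa using he i)⟩

theorem pi_π {ι : Type w} (Y : ι → V) [HasProduct Y] : JointlyMonic (Pi.π Y) :=
  fun _ g h => Pi.hom_ext g h

end JointlyMonic

theorem Pi.lift_tensorHom_id_comp_lift {V : Type u} [Category.{v} V] [MonoidalCategory V]
    {ι : Type w} {B : V} {Bi : ι → V} (β : ∀ i, B ⟶ Bi i) (A : V)
    [HasProduct Bi] [HasProduct (fun i => Bi i ⊗ A)] :
    (Pi.lift β ⊗ₘ 𝟙 A) ≫ Pi.lift (fun i => Pi.π Bi i ⊗ₘ 𝟙 A) =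
      Pi.lift (fun i => β i ⊗ₘ 𝟙 A) :=
  Pi.hom_ext _ _ fun i => by simp [← comp_whiskerRight]

/-- in a monoidal category with small products, an object `A` is very flat
iff it is flat and for every small family `(B i)` the canonical morphism
`(∏ᶜ B) ⊗ A ⟶ ∏ᶜ (B i ⊗ A)` (determined by `π'_i ∘ ĵ = π_i ⊗ id_A`) is a monomorphism. -/
theorem veryFlat_iff_flat_and_mono_prodComparison
    {V : Type u} [Category.{v} V] [MonoidalCategory V] [HasProducts.{v} V] (A : V) :
    VeryFlat.{v} A ↔
      (Flat A ∧ ∀ {I : Type v} (B : I → V),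
        Mono (Pi.lift (fun i => Pi.π B i ⊗ₘ 𝟙 A) :
          (∏ᶜ B) ⊗ A ⟶ ∏ᶜ (fun i => B i ⊗ A))) := by
  constructor
  · intro hA
    refine ⟨fun X Y f hf => ?_, fun B => ?_⟩
    · rw [← JointlyMonic.const_iff_mono (ι := PUnit.{v + 1})] at hf ⊢
      exact hA _ hf
    · exact (JointlyMonic.iff_mono_pi_lift _).1 (hA _ (JointlyMonic.pi_π B))
  · rintro ⟨hflat, hprod⟩ ι B Bi β hβ
    have : Mono (Pi.lift β ⊗ₘ 𝟙 A) := hflat _ ((JointlyMonic.iff_mono_pi_lift β).1 hβ)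
    rw [JointlyMonic.iff_mono_pi_lift, ← Pi.lift_tensorHom_id_comp_lift]
    exact mono_comp _ _
end

section
/- Let k be a commutative ring and P a projective k-module. Then P is very flat: for every jointly injective family of k-linear maps (α_j : A →ₗ[k] A_j)_{j∈J}, the family (id_P ⊗ α_j : P ⊗_k A →ₗ[k] P ⊗_k A_j)_{j∈J} is again jointly injective. -/
universe u v w v₁ v₂

open TensorProduct

/-- The free case: `ι →₀ k` is very flat. -/
theorem free_veryFlat
    {k : Type u} [CommRing k] {ι : Type v} [DecidableEq ι]
    {J : Type w} {A : Type v₁} [AddCommGroup A] [Module k A]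
    {Aj : J → Type v₂} [∀ j, AddCommGroup (Aj j)] [∀ j, Module k (Aj j)]
    (α : ∀ j, A →ₗ[k] Aj j)
    (hα : ∀ a : A, (∀ j, α j a = 0) → a = 0) :
    ∀ x : (ι →₀ k) ⊗[k] A, (∀ j, LinearMap.lTensor (ι →₀ k) (α j) x = 0) → x = 0 := by
  intro x hx
  have key : ∀ (j : J),
      (TensorProduct.finsuppScalarLeft k (Aj j) ι).toLinearMap ∘ₗ
        LinearMap.lTensor (ι →₀ k) (α j)
      = Finsupp.mapRange.linearMap (α j) ∘ₗ
        (TensorProduct.finsuppScalarLeft k A ι).toLinearMap := by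
    intro j
    apply TensorProduct.ext'
    intro p a
    ext i
    simp [TensorProduct.finsuppScalarLeft_apply_tmul_apply]
  have hxi : ∀ i : ι, TensorProduct.finsuppScalarLeft k A ι x i = 0 := by
    intro i
    apply hα
    intro j
    have := congrArg (fun f => f x) (key j)
    simp only [LinearMap.comp_apply, LinearEquiv.coe_coe] at this
    rw [hx j] at this
    have h2 := congrArg (fun f => f i) this.symm
    simpa using h2
  have : TensorProduct.finsuppScalarLeft k A ι x = 0 := by
    ext i; exact hxi i
  exact (map_eq_zero_iff _ (TensorProduct.finsuppScalarLeft k A ι).injective).mp this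

/-- a projective module over a commutative ring is very flat:
tensoring with it preserves jointly injective families of linear maps. -/
theorem projective_veryFlat
    {k : Type u} [CommRing k] {P : Type v} [AddCommGroup P] [Module k P]
    (hP : Module.Projective k P)
    {J : Type w} {A : Type v₁} [AddCommGroup A] [Module k A]
    {Aj : J → Type v₂} [∀ j, AddCommGroup (Aj j)] [∀ j, Module k (Aj j)]
    (α : ∀ j, A →ₗ[k] Aj j)
    (hα : ∀ a : A, (∀ j, α j a = 0) → a = 0) :
    ∀ x : P ⊗[k] A, (∀ j, LinearMap.lTensor P (α j) x = 0) → x = 0 := by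
  obtain ⟨s, hs⟩ := hP.out
  set π : (P →₀ k) →ₗ[k] P := Finsupp.linearCombination k id with hπ
  intro x hx
  have hfree : LinearMap.rTensor A s x = 0 := by
    classical
    apply free_veryFlat α hα
    intro j
    have h1 : LinearMap.lTensor (P →₀ k) (α j) ∘ₗ LinearMap.rTensor A s
        = LinearMap.rTensor (Aj j) s ∘ₗ LinearMap.lTensor P (α j) := by
      rw [LinearMap.lTensor_comp_rTensor, LinearMap.rTensor_comp_lTensor]
    have := congrArg (fun f => f x) h1
    simp only [LinearMap.comp_apply] at this
    rw [this, hx j, map_zero]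
  have : LinearMap.rTensor A π (LinearMap.rTensor A s x) = x := by
    rw [← LinearMap.comp_apply, ← LinearMap.rTensor_comp]
    have hcomp : π ∘ₗ s = LinearMap.id := by
      ext p; exact hs p
    rw [hcomp, LinearMap.rTensor_id, LinearMap.id_apply]
  rw [← this, hfree, map_zero]
end

section
/- Let k be a commutative ring and P a k-module with the following local projectivity property: for every k-module A, the family of k-linear maps (f ⊗ id_A : P ⊗_k A → A)_{f ∈ Hom_k(P,k)}, sending p ⊗ a to f(p)·a, is jointly injective. Then P is very flat: for every jointly injective family of k-linear maps (α_j : A →ₗ[k] A_j)_{j∈J}, the family (id_P ⊗ α_j : P ⊗_k A →ₗ[k] P ⊗_k A_j)_{j∈J} is again jointly injective. -/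
universe u v w v₁ v₂

open TensorProduct

/-- a locally projective module over a commutative ring (in the sense that
for every module `A` the family of maps `f ⊗ id_A : P ⊗ A → A`, `p ⊗ a ↦ f(p) • a`, indexed by
`f ∈ Hom_k(P, k)`, is jointly injective) is very flat: tensoring with it preserves jointly
injective families of linear maps. -/
theorem locallyProjective_veryFlat
    {k : Type u} [CommRing k] {P : Type v} [AddCommGroup P] [Module k P]
    (hP : ∀ (A : Type v₁) [AddCommGroup A] [Module k A],
      ∀ x : P ⊗[k] A,
        (∀ f : P →ₗ[k] k,
          (TensorProduct.lid k A).toLinearMap (LinearMap.rTensor A f x) = 0) → x = 0)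
    {J : Type w} {A : Type v₁} [AddCommGroup A] [Module k A]
    {Aj : J → Type v₂} [∀ j, AddCommGroup (Aj j)] [∀ j, Module k (Aj j)]
    (α : ∀ j, A →ₗ[k] Aj j)
    (hα : ∀ a : A, (∀ j, α j a = 0) → a = 0) :
    ∀ x : P ⊗[k] A, (∀ j, LinearMap.lTensor P (α j) x = 0) → x = 0 := by
  intro x hx
  apply hP A x
  intro f
  apply hα
  intro j
  have key : (α j).comp ((TensorProduct.lid k A).toLinearMap.comp (LinearMap.rTensor A f))
      = (TensorProduct.lid k (Aj j)).toLinearMap.comp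
        ((LinearMap.rTensor (Aj j) f).comp (LinearMap.lTensor P (α j))) := by
    ext p a
    simp
  have := congrArg (fun g : P ⊗[k] A →ₗ[k] Aj j => g x) key
  simp only [LinearMap.comp_apply] at this
  rw [this, hx j]
  simp
end
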